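/- With the notation of the context, if neither 0 < ((λ₁+λ₂)/(1+λ₁λ₂))·β < α < β nor β < α ≤ ((λ₁+λ₂)/(1+λ₁λ₂))·β < 0 holds, then Φ(1) ∈ (−π, π]. (This is case '0' of Lemma 2.8: for lifts A, B of τ_{∞,0}(λ₁), τ_{α,β}(λ₂) to the m-fold covering group of PSL(2,ℝ), lev_m(A·B) − lev_m(A) − lev_m(B) = 0.) -/

import Mathlib

/-!
Write `A = λ₁(t)`, `B = λ₂(t)` and `c = (A + B) / (1 + AB)`. A direct computation gives
`Re w(t) = (1 + AB)(α - cβ)(α - β) / ((α - β)² √A √B)` and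
`Im w(t) = -(B - 1)(Aαβ + 1)(α - β) / ((α - β)² √A √B)`.
On `[1, ∞)²` the ratio `c` is antitone in each variable and at most `1`, so along the path it stays
in `[c₁, 1]` with `c₁ = (λ₁ + λ₂) / (1 + λ₁λ₂)`. Excluding the two cases therefore keeps `α` from
lying strictly between `cβ` and `β`, i.e. `Re w(t) ≥ 0`; and `Re w(t) = 0` forces
`0 < α = cβ < β` and `B > 1`, hence `Im w(t) > 0`. So `w` stays in the slit plane, where `arg` is
continuous, and `t ↦ 2 arg w(t)` is a continuous lift of `(w / |w|)²` through `ℝ → S¹` that agrees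
with `Φ` at `t = 0` (as `M(0) = 1`). By uniqueness of lifts, `Φ(1) = 2 arg w(1) ∈ (-π, π]`.
-/

/-- `λ(t) = 1 + t(λ−1)`, deforming the shift parameter from `1` to `λ`. -/
noncomputable def lamt (l t : ℝ) : ℝ := 1 + t * (l - 1)

/-- The hyperbolic element `τ_{∞,0}(λ₁(t))` of `SL(2,ℝ)` as a matrix. -/
noncomputable def matA (l1 t : ℝ) : Matrix (Fin 2) (Fin 2) ℝ :=
  !![Real.sqrt (lamt l1 t), 0; 0, (Real.sqrt (lamt l1 t))⁻¹]

/-- The hyperbolic element `τ_{α,β}(λ₂(t))` of `SL(2,ℝ)` with fixed points `α`, `β`. -/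
noncomputable def matB (l2 α β t : ℝ) : Matrix (Fin 2) (Fin 2) ℝ :=
  ((α - β) * Real.sqrt (lamt l2 t))⁻¹ •
    !![lamt l2 t * α - β, -((lamt l2 t - 1) * α * β);
       lamt l2 t - 1, α - lamt l2 t * β]

/-- The product path `M(t) = A(t)·B(t)`. -/
noncomputable def matM (l1 l2 α β t : ℝ) : Matrix (Fin 2) (Fin 2) ℝ :=
  matA l1 t * matB l2 α β t

/-- `w(t) = (a(t)+d(t)) + i(b(t)−c(t))`. -/
noncomputable def wfun (l1 l2 α β t : ℝ) : ℂ :=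
  ((matM l1 l2 α β t 0 0 + matM l1 l2 α β t 1 1 : ℝ) : ℂ) +
    Complex.I * ((matM l1 l2 α β t 0 1 - matM l1 l2 α β t 1 0 : ℝ) : ℂ)

open Complex Set

theorem eqOn_two_mul_arg_of_exp_eq {X : Type*} [TopologicalSpace X] {s : Set X}
    (hs : IsPreconnected s) {Φ : X → ℝ} {w : X → ℂ}
    (hΦc : ContinuousOn Φ s) (hwc : ContinuousOn w s) (hw : MapsTo w s slitPlane)
    (hΦ : ∀ x ∈ s, exp (I * Φ x) = (w x / ‖w x‖) ^ 2)
    {x₀ : X} (hx₀ : x₀ ∈ s) (h₀ : Φ x₀ = 2 * arg (w x₀)) :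
    EqOn Φ (fun x => 2 * arg (w x)) s := by
  refine Circle.isCoveringMap_exp.eqOn_of_comp_eqOn hs hΦc
    (continuousOn_const.mul fun x hx =>
      (continuousAt_arg (hw hx)).comp_continuousWithinAt (hwc x hx)) (fun x hx => ?_) hx₀ h₀
  have hw0 : (‖w x‖ : ℂ) ≠ 0 := by simpa using slitPlane_ne_zero (hw hx)
  apply Circle.coe_injective
  simp only [Function.comp_apply, Circle.coe_exp]
  rw [mul_comm, hΦ x hx, div_pow, div_eq_iff (pow_ne_zero 2 hw0)]
  conv_lhs => rw [← norm_mul_exp_arg_mul_I (w x)]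
  rw [mul_pow, ← Complex.exp_nat_mul]
  push_cast; ring_nf

namespace Complex

theorem mem_slitPlane_of_re_nonneg {z : ℂ} (hre : 0 ≤ z.re) (him : z.re = 0 → 0 < z.im) :
    z ∈ slitPlane := by
  rw [mem_slitPlane_iff]
  rcases hre.eq_or_lt with h | h
  · exact .inr (him h.symm).ne'
  · exact .inl h

theorem arg_mem_Ioc_of_re_nonneg {z : ℂ} (hre : 0 ≤ z.re) (him : z.re = 0 → 0 ≤ z.im) :
    arg z ∈ Ioc (-(Real.pi / 2)) (Real.pi / 2) := by
  obtain ⟨hlo, hhi⟩ := abs_le.1 (abs_arg_le_pi_div_two_iff.2 hre)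
  refine ⟨hlo.lt_of_ne fun h => ?_, hhi⟩
  obtain ⟨hre0, him0⟩ := arg_eq_neg_pi_div_two_iff.1 h.symm
  exact (him hre0).not_gt him0

end Complex

noncomputable def lamRatio (A B : ℝ) : ℝ := (A + B) / (1 + A * B)

theorem lamRatio_pos {A B : ℝ} (hA : 0 < A) (hB : 0 < B) : 0 < lamRatio A B := by
  unfold lamRatio; positivity

theorem lamRatio_le_one {A B : ℝ} (hA : 1 ≤ A) (hB : 1 ≤ B) : lamRatio A B ≤ 1 := by
  rw [lamRatio, div_le_one (by positivity)]
  nlinarith [mul_nonneg (sub_nonneg.2 hA) (sub_nonneg.2 hB)]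

theorem lamRatio_le_lamRatio {A B A' B' : ℝ} (hA : 1 ≤ A) (hB : 1 ≤ B) (hAA' : A ≤ A')
    (hBB' : B ≤ B') : lamRatio A' B' ≤ lamRatio A B := by
  rw [lamRatio, lamRatio, div_le_div_iff₀ (by nlinarith) (by nlinarith)]
  nlinarith [mul_nonneg (sub_nonneg.2 hAA') (by nlinarith : (0 : ℝ) ≤ B * B' - 1),
    mul_nonneg (sub_nonneg.2 hBB') (by nlinarith : (0 : ℝ) ≤ A * A' - 1)]

theorem lamRatio_one_right {A : ℝ} (hA : A ≠ -1) : lamRatio A 1 = 1 := by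
  rw [lamRatio, mul_one, add_comm, div_self]
  contrapose! hA; linarith

section NotBetween

variable {c c₁ α β : ℝ} (hc₁ : 0 < c₁) (hc₁c : c₁ ≤ c) (hc : c ≤ 1)
  (h₂ : ¬(β < α ∧ α ≤ c₁ * β ∧ c₁ * β < 0))
include hc₁ hc₁c hc h₂

theorem sub_mul_sub_nonneg (h₁ : ¬(0 < c₁ * β ∧ c₁ * β < α ∧ α < β)) :
    0 ≤ (α - c * β) * (α - β) := by
  rcases lt_trichotomy β 0 with hβ | rfl | hβ
  · have hcβ : β ≤ c * β := by nlinarith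
    have hcβ₁ : c * β ≤ c₁ * β := mul_le_mul_of_nonpos_right hc₁c hβ.le
    rcases le_or_gt α β with hαβ | hαβ
    · exact mul_nonneg_of_nonpos_of_nonpos (by linarith) (by linarith)
    · have : c₁ * β < α := by by_contra! h; exact h₂ ⟨hαβ, h, by nlinarith⟩
      exact mul_nonneg (by linarith) (by linarith)
  · simpa using mul_self_nonneg α
  · have hcβ : c * β ≤ β := by nlinarith
    have hcβ₁ : c₁ * β ≤ c * β := mul_le_mul_of_nonneg_right hc₁c hβ.le
    rcases lt_or_ge α β with hαβ | hαβ
    · have : α ≤ c₁ * β := by by_contra! h; exact h₁ ⟨by positivity, h, hαβ⟩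
      exact mul_nonneg_of_nonpos_of_nonpos (by linarith) (by linarith)
    · exact mul_nonneg (by linarith) (by linarith)

theorem eq_mul_and_pos_and_lt_of_sub_mul_sub_eq_zero (hαβ : α ≠ β)
    (h : (α - c * β) * (α - β) = 0) : α = c * β ∧ 0 < α ∧ α < β := by
  have hα : α = c * β := by
    rcases mul_eq_zero.1 h with h | h
    · linarith
    · exact absurd (sub_eq_zero.1 h) hαβ
  rcases lt_trichotomy β 0 with hβ | rfl | hβ
  · have hcβ₁ : c * β ≤ c₁ * β := mul_le_mul_of_nonpos_right hc₁c hβ.le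
    have : β < α := (show β ≤ α by nlinarith).lt_of_ne' hαβ
    exact absurd ⟨this, hα ▸ hcβ₁, by nlinarith⟩ h₂
  · simp_all
  · exact ⟨hα, hα ▸ mul_pos (hc₁.trans_le hc₁c) hβ, (show α ≤ β by nlinarith).lt_of_ne hαβ⟩

end NotBetween

section Path

variable {l1 l2 α β t : ℝ}

@[simp] theorem lamt_zero (l : ℝ) : lamt l 0 = 1 := by simp [lamt]

theorem one_le_lamt {l : ℝ} (hl : 1 ≤ l) (ht : 0 ≤ t) : 1 ≤ lamt l t := by
  unfold lamt; nlinarith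

theorem lamt_le {l : ℝ} (hl : 1 ≤ l) (ht : t ≤ 1) : lamt l t ≤ l := by
  unfold lamt; nlinarith

theorem matM_zero (hαβ : α ≠ β) : matM l1 l2 α β 0 = 1 := by
  have : α - β ≠ 0 := sub_ne_zero.2 hαβ
  ext i j; fin_cases i <;> fin_cases j <;> simp [matM, matA, matB, this]

-- Numerator and denominator carry an extra factor `α - β`, making the denominator positive.
theorem wfun_re (hαβ : α ≠ β) (h1 : 0 < lamt l1 t) (h2 : 0 < lamt l2 t) :
    (wfun l1 l2 α β t).re = (1 + lamt l1 t * lamt l2 t) *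
      ((α - lamRatio (lamt l1 t) (lamt l2 t) * β) * (α - β)) /
        ((α - β) ^ 2 * (√(lamt l1 t) * √(lamt l2 t))) := by
  obtain ⟨a, ha, hA⟩ : ∃ a, 0 < a ∧ lamt l1 t = a * a :=
    ⟨_, Real.sqrt_pos.2 h1, (Real.mul_self_sqrt h1.le).symm⟩
  obtain ⟨b, hb, hB⟩ : ∃ b, 0 < b ∧ lamt l2 t = b * b :=
    ⟨_, Real.sqrt_pos.2 h2, (Real.mul_self_sqrt h2.le).symm⟩
  have : α - β ≠ 0 := sub_ne_zero.2 hαβ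
  rw [show (wfun l1 l2 α β t).re = matM l1 l2 α β t 0 0 + matM l1 l2 α β t 1 1 by simp [wfun]]
  simp [matM, matA, matB, lamRatio, Matrix.mul_apply, Fin.sum_univ_two, hA, hB,
    Real.sqrt_mul_self ha.le, Real.sqrt_mul_self hb.le]
  field_simp
  ring

theorem wfun_im (hαβ : α ≠ β) (h1 : 0 < lamt l1 t) (h2 : 0 < lamt l2 t) :
    (wfun l1 l2 α β t).im = -((lamt l2 t - 1) * (lamt l1 t * α * β + 1) * (α - β)) /
        ((α - β) ^ 2 * (√(lamt l1 t) * √(lamt l2 t))) := by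
  obtain ⟨a, ha, hA⟩ : ∃ a, 0 < a ∧ lamt l1 t = a * a :=
    ⟨_, Real.sqrt_pos.2 h1, (Real.mul_self_sqrt h1.le).symm⟩
  obtain ⟨b, hb, hB⟩ : ∃ b, 0 < b ∧ lamt l2 t = b * b :=
    ⟨_, Real.sqrt_pos.2 h2, (Real.mul_self_sqrt h2.le).symm⟩
  have : α - β ≠ 0 := sub_ne_zero.2 hαβ
  rw [show (wfun l1 l2 α β t).im = matM l1 l2 α β t 0 1 - matM l1 l2 α β t 1 0 by simp [wfun]]
  simp [matM, matA, matB, Matrix.mul_apply, Fin.sum_univ_two, hA, hB,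
    Real.sqrt_mul_self ha.le, Real.sqrt_mul_self hb.le]
  field_simp
  ring

theorem continuousOn_wfun (hl1 : 1 ≤ l1) (hl2 : 1 ≤ l2) (hαβ : α ≠ β) :
    ContinuousOn (wfun l1 l2 α β) (Icc 0 1) := by
  have hsqrt {l : ℝ} (hl : 1 ≤ l) : ∀ t ∈ Icc (0 : ℝ) 1, √(lamt l t) ≠ 0 := fun t ht =>
    (Real.sqrt_pos.2 (zero_lt_one.trans_le (one_le_lamt hl ht.1))).ne'
  have h1 := hsqrt hl1
  have h2 : ∀ t ∈ Icc (0 : ℝ) 1, (α - β) * √(lamt l2 t) ≠ 0 := fun t ht =>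
    mul_ne_zero (sub_ne_zero.2 hαβ) (hsqrt hl2 t ht)
  unfold wfun matM matA matB lamt
  refine (continuous_ofReal.comp_continuousOn ?_).add
    (continuousOn_const.mul (continuous_ofReal.comp_continuousOn ?_)) <;>
  simp only [Matrix.mul_apply, Fin.sum_univ_two, Matrix.smul_apply, Matrix.of_apply,
    Matrix.cons_val', Matrix.cons_val_zero, Matrix.cons_val_one, Matrix.empty_val',
    Matrix.cons_val_fin_one, smul_eq_mul] <;>
  fun_prop (disch := assumption)

end Path

section PathSign

variable {l1 l2 α β t : ℝ} (hl1 : 1 ≤ l1) (hl2 : 1 ≤ l2) (hαβ : α ≠ β)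
  (hcase₂ : ¬(β < α ∧ α ≤ lamRatio l1 l2 * β ∧ lamRatio l1 l2 * β < 0))
  (ht : t ∈ Icc (0 : ℝ) 1)
include hl1 hl2 hαβ hcase₂ ht

theorem wfun_re_nonneg
    (hcase₁ : ¬(0 < lamRatio l1 l2 * β ∧ lamRatio l1 l2 * β < α ∧ α < β)) :
    0 ≤ (wfun l1 l2 α β t).re := by
  have hA := one_le_lamt hl1 ht.1
  have hB := one_le_lamt hl2 ht.1
  rw [wfun_re hαβ (by positivity) (by positivity)]
  have := sub_mul_sub_nonneg (lamRatio_pos (by positivity) (by positivity))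
    (lamRatio_le_lamRatio hA hB (lamt_le hl1 ht.2) (lamt_le hl2 ht.2)) (lamRatio_le_one hA hB)
    hcase₂ hcase₁
  positivity

theorem wfun_im_pos_of_re_eq_zero (hre : (wfun l1 l2 α β t).re = 0) :
    0 < (wfun l1 l2 α β t).im := by
  have hA := one_le_lamt hl1 ht.1
  have hB := one_le_lamt hl2 ht.1
  rw [wfun_re hαβ (by positivity) (by positivity)] at hre
  rw [wfun_im hαβ (by positivity) (by positivity)]
  have hD : 0 < (α - β) ^ 2 * (√(lamt l1 t) * √(lamt l2 t)) := by
    have := sub_ne_zero.2 hαβ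
    positivity
  obtain ⟨hα, hα0, hαβ'⟩ := eq_mul_and_pos_and_lt_of_sub_mul_sub_eq_zero
    (lamRatio_pos (by positivity) (by positivity))
    (lamRatio_le_lamRatio hA hB (lamt_le hl1 ht.2) (lamt_le hl2 ht.2)) (lamRatio_le_one hA hB)
    hcase₂ hαβ
    (by simpa [hD.ne', (by positivity : (0 : ℝ) < 1 + lamt l1 t * lamt l2 t).ne'] using hre)
  have hB1 : 1 < lamt l2 t := by
    refine hB.lt_of_ne fun h => hαβ ?_
    rw [← h, lamRatio_one_right (by linarith), one_mul] at hα
    exact hα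
  have hquad_pos : 0 < lamt l1 t * α * β + 1 := by
    have := mul_pos (mul_pos (zero_lt_one.trans_le hA) hα0) (hα0.trans hαβ')
    linarith
  exact div_pos (neg_pos.2 (mul_neg_of_pos_of_neg (mul_pos (sub_pos.2 hB1) hquad_pos)
    (sub_neg.2 hαβ'))) hD

end PathSign

theorem lemma28_case_zero_general (l1 l2 α β : ℝ) (hl1 : 1 < l1) (hl2 : 1 < l2)
    (hαβ : α ≠ β)
    (Φ : ℝ → ℝ) (hΦc : ContinuousOn Φ (Set.Icc 0 1)) (hΦ0 : Φ 0 = 0)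
    (hΦ : ∀ t ∈ Set.Icc (0 : ℝ) 1,
      Complex.exp (Complex.I * (Φ t : ℂ))
        = (wfun l1 l2 α β t / (‖wfun l1 l2 α β t‖ : ℂ)) ^ 2)
    (hcase₁ : ¬(0 < (l1 + l2) / (1 + l1 * l2) * β ∧
      (l1 + l2) / (1 + l1 * l2) * β < α ∧ α < β))
    (hcase₂ : ¬(β < α ∧ α ≤ (l1 + l2) / (1 + l1 * l2) * β ∧
      (l1 + l2) / (1 + l1 * l2) * β < 0)) :
    Φ 1 ∈ Set.Ioc (-Real.pi) Real.pi := by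
  have hre {t} (ht : t ∈ Icc (0 : ℝ) 1) := wfun_re_nonneg hl1.le hl2.le hαβ hcase₂ ht hcase₁
  have him {t} (ht : t ∈ Icc (0 : ℝ) 1) := wfun_im_pos_of_re_eq_zero hl1.le hl2.le hαβ hcase₂ ht
  have hstart : Φ 0 = 2 * arg (wfun l1 l2 α β 0) := by
    simp [wfun, matM_zero hαβ, hΦ0, one_add_one_eq_two]
  have hlift := eqOn_two_mul_arg_of_exp_eq isPreconnected_Icc hΦc
    (continuousOn_wfun hl1.le hl2.le hαβ) (fun t ht => mem_slitPlane_of_re_nonneg (hre ht) (him ht))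
    hΦ (left_mem_Icc.2 zero_le_one) hstart
  have h1 : (1 : ℝ) ∈ Icc (0 : ℝ) 1 := right_mem_Icc.2 zero_le_one
  obtain ⟨hlo, hhi⟩ := arg_mem_Ioc_of_re_nonneg (hre h1) fun h => (him h1 h).le
  rw [hlift h1]
  constructor <;> linarith

/-- Case `0` of Lemma 2.8: if neither `0 < ((λ₁+λ₂)/(1+λ₁λ₂))·β < α < β` nor
`β < α ≤ ((λ₁+λ₂)/(1+λ₁λ₂))·β < 0` holds, then `Φ(1) ∈ (−π, π]`. -/
theorem lemma28_case_zero (l1 l2 α β : ℝ) (hl1 : 1 < l1) (hl2 : 1 < l2)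
    (hα : α ≠ 0) (hβ : β ≠ 0) (hαβ : α ≠ β)
    (Φ : ℝ → ℝ) (hΦc : ContinuousOn Φ (Set.Icc 0 1)) (hΦ0 : Φ 0 = 0)
    (hΦ : ∀ t ∈ Set.Icc (0 : ℝ) 1,
      Complex.exp (Complex.I * (Φ t : ℂ))
        = (wfun l1 l2 α β t / (‖wfun l1 l2 α β t‖ : ℂ)) ^ 2)
    (hcase₁ : ¬(0 < (l1 + l2) / (1 + l1 * l2) * β ∧
      (l1 + l2) / (1 + l1 * l2) * β < α ∧ α < β))
    (hcase₂ : ¬(β < α ∧ α ≤ (l1 + l2) / (1 + l1 * l2) * β ∧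
      (l1 + l2) / (1 + l1 * l2) * β < 0)) :
    Φ 1 ∈ Set.Ioc (-Real.pi) Real.pi :=
  lemma28_case_zero_general l1 l2 α β hl1 hl2 hαβ Φ hΦc hΦ0 hΦ hcase₁ hcase₂
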